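/- Let 0 < α < 1 and define, for 0 < β < 1, ρ(α,β) = 2 + 2β − 2α² inf_{γ ∈ Γ_{α,β}} F_{2,β}(γ), where F_{h,β}(γ) = γ²(1−β) + h(1 − γ(1−β))²/β and Γ_{α,β} = {γ ≥ 0 : 2 − 2β − 2α² F_{0,β}(γ) ≥ 0}. Then for all 0 < β < 1 one has ρ(α,β) ≥ 2 + 2β − 2α² F_{2,β}(1) = 2(1 − α²)(1 + β), and moreover β ↦ ρ(α,β) is nondecreasing on (0,1). -/

import Mathlib

open MeasureTheory ProbabilityTheory Real Filter

noncomputable section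

/-- The constant `g = 2 / π`. -/
def gconst : ℝ := 2 / Real.pi

/-- The lattice box `V_N = {1, …, N}² ⊆ ℤ²`. -/
def latBox (N : ℕ) : Finset (ℤ × ℤ) :=
  Finset.Icc (1 : ℤ) (N : ℤ) ×ˢ Finset.Icc (1 : ℤ) (N : ℤ)

/-- Nearest-neighbor adjacency in `ℤ²`. -/
def adj (p q : ℤ × ℤ) : Prop := |p.1 - q.1| + |p.2 - q.2| = 1

open Classical in
/-- The boundary `∂V_N`: points of `V_N` having a nearest neighbor outside `V_N`. -/
def latBdry (N : ℕ) : Finset (ℤ × ℤ) :=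
  (latBox N).filter fun p => ∃ q, q ∉ latBox N ∧ adj p q

/-- The interior `int(V_N)`. -/
def latInt (N : ℕ) : Finset (ℤ × ℤ) := latBox N \ latBdry N

open Classical in
/-- The Hamiltonian `H(φ) = (1/8) Σ_{x,y ∈ V_N, |x-y|=1} (φ_x - φ_y)²`. -/
def ham (N : ℕ) (φ : ℤ × ℤ → ℝ) : ℝ :=
  (1 / 8) * ∑ p ∈ latBox N, ∑ q ∈ latBox N, if adj p q then (φ p - φ q) ^ 2 else 0

/-- Extension by zero outside the interior of the box (zero boundary conditions). -/
def extendZero (N : ℕ) (φ : {p // p ∈ latInt N} → ℝ) : ℤ × ℤ → ℝ :=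
  fun p => if h : p ∈ latInt N then φ ⟨p, h⟩ else 0

/-- The law `P` of the two-dimensional discrete Gaussian free field on `V_N`:
the Gibbs measure on fields with zero boundary conditions whose density with
respect to Lebesgue measure on the interior coordinates is proportional to
`exp(-H(Φ))`. -/
def gibbs (N : ℕ) : Measure ((ℤ × ℤ) → ℝ) :=
  let μ : Measure ({p // p ∈ latInt N} → ℝ) :=
    volume.withDensity fun φ => ENNReal.ofReal (Real.exp (-ham N (extendZero N φ)))
  (μ Set.univ)⁻¹ • μ.map (extendZero N)

/-- Euclidean distance between lattice points. -/
def eDist (p q : ℤ × ℤ) : ℝ :=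
  Real.sqrt (((p.1 - q.1 : ℤ) : ℝ) ^ 2 + ((p.2 - q.2 : ℤ) : ℝ) ^ 2)

open Classical in
/-- `V_N^l`: points of `V_N` at Euclidean distance at least `l·N` from `V_Nᶜ`. -/
def innerBox (N : ℕ) (l : ℝ) : Finset (ℤ × ℤ) :=
  (latBox N).filter fun p => ∀ q, q ∉ latBox N → l * N ≤ eDist p q

/-- The entropic repulsion event `Ω_{N,l}^+ = {Φ_x ≥ 0 for all x ∈ V_N^l}`. -/
def posEvent (N : ℕ) (l : ℝ) : Set ((ℤ × ℤ) → ℝ) := {ω | ∀ p ∈ innerBox N l, 0 ≤ ω p}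

open Classical in
/-- The set `H_N(η) = {x ∈ V_N^l : Φ_x ≥ 2√g η log N}` of `η`-high points. -/
def highSet (N : ℕ) (l η : ℝ) (ω : (ℤ × ℤ) → ℝ) : Finset (ℤ × ℤ) :=
  (innerBox N l).filter fun x => 2 * Real.sqrt gconst * η * Real.log N ≤ ω x

/-- The square box `B(x, a)` of center `x` and side length `a`, intersected with `ℤ²`. -/
def sqBox (x : ℤ × ℤ) (a : ℝ) : Set (ℤ × ℤ) :=
  {y | 2 * |((y.1 - x.1 : ℤ) : ℝ)| ≤ a ∧ 2 * |((y.2 - x.2 : ℤ) : ℝ)| ≤ a}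

/-- `F_{h,β}(γ) = γ²(1-β) + h(1-γ(1-β))²/β`. -/
def Ffun (h β γ : ℝ) : ℝ := γ ^ 2 * (1 - β) + h * (1 - γ * (1 - β)) ^ 2 / β

/-- The constraint set `Γ_{α,β} = {γ ≥ 0 : 2 - 2β - 2α² F_{0,β}(γ) ≥ 0}`. -/
def Gam (α β : ℝ) : Set ℝ := {γ | 0 ≤ γ ∧ 0 ≤ 2 - 2 * β - 2 * α ^ 2 * Ffun 0 β γ}

/-- The pair-count exponent `ρ(α,β) = 2 + 2β - 2α² inf_{γ ∈ Γ_{α,β}} F_{2,β}(γ)`. -/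
def rhoExp (α β : ℝ) : ℝ := 2 + 2 * β - 2 * α ^ 2 * sInf (Ffun 2 β '' Gam α β)

/-- The σ-algebra `F_A` generated by the field coordinates in `A`. -/
def coordSigma (A : Set (ℤ × ℤ)) : MeasurableSpace ((ℤ × ℤ) → ℝ) :=
  MeasurableSpace.comap (fun ω (p : A) => ω (p : ℤ × ℤ)) inferInstance

/-- The boundary of a set `S ⊆ ℤ²`: points of `S` with a nearest neighbor outside `S`. -/
def setBdry (S : Set (ℤ × ℤ)) : Set (ℤ × ℤ) := {p ∈ S | ∃ q, q ∉ S ∧ adj p q}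

/-- `Φ_B = E(Φ_{x_B} | F_{∂B})` for the box `B` of center `z` and side length `a`. -/
def boxField (N : ℕ) (z : ℤ × ℤ) (a : ℝ) : ((ℤ × ℤ) → ℝ) → ℝ :=
  (gibbs N)[(fun ω => ω z)|coordSigma (setBdry (sqBox z a))]

/-! Since `F_{0,β}(γ) = γ²(1-β)`, the constraint set is `{0 ≤ γ ≤ 1/α}` for every `β < 1`, and it
contains `γ = 1` when `α ≤ 1`, where `F_{2,β}(1) = 1 + β`. Expanding
`F_{2,β}(γ) = γ²(1+β) + 4γ(1-γ) + 2(1-γ)²/β` shows that on this common constraint set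
`β ↦ 2β - 2α² F_{2,β}(γ)` is nondecreasing, because `α²γ² ≤ 1`; taking the infimum over `γ`
keeps the monotonicity. -/

theorem csInf_image_le_csInf_image_add {ι : Type*} {S : Set ι} {f g : ι → ℝ} {c : ℝ}
    (hS : S.Nonempty) (hg : BddBelow (g '' S)) (hgf : ∀ x ∈ S, g x ≤ f x + c) :
    sInf (g '' S) ≤ sInf (f '' S) + c := by
  rw [← sub_le_iff_le_add]
  refine le_csInf (hS.image f) ?_
  rintro _ ⟨x, hx, rfl⟩
  linarith [csInf_le hg ⟨x, hx, rfl⟩, hgf x hx]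

theorem Ffun_zero (β γ : ℝ) : Ffun 0 β γ = γ ^ 2 * (1 - β) := by
  simp [Ffun]

theorem Ffun_nonneg {h β : ℝ} (γ : ℝ) (hh : 0 ≤ h) (hβ0 : 0 ≤ β) (hβ1 : β ≤ 1) :
    0 ≤ Ffun h β γ := by
  unfold Ffun
  have : 0 ≤ 1 - β := by linarith
  positivity

theorem bddBelow_Ffun_image {h β : ℝ} (S : Set ℝ) (hh : 0 ≤ h) (hβ0 : 0 ≤ β) (hβ1 : β ≤ 1) :
    BddBelow (Ffun h β '' S) :=
  ⟨0, by rintro _ ⟨γ, -, rfl⟩; exact Ffun_nonneg γ hh hβ0 hβ1⟩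

theorem Ffun_two_eq {β : ℝ} (γ : ℝ) (hβ : β ≠ 0) :
    Ffun 2 β γ = γ ^ 2 * (1 + β) + 4 * γ * (1 - γ) + 2 * (1 - γ) ^ 2 / β := by
  unfold Ffun
  field_simp
  ring

theorem Ffun_two_one {β : ℝ} (hβ : β ≠ 0) : Ffun 2 β 1 = 1 + β := by
  rw [Ffun_two_eq 1 hβ]
  ring

theorem Ffun_two_le_add {α β₁ β₂ γ : ℝ} (hα : α ≠ 0) (hβ₁ : 0 < β₁) (hβ : β₁ ≤ β₂)
    (hγ : α ^ 2 * γ ^ 2 ≤ 1) :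
    Ffun 2 β₂ γ ≤ Ffun 2 β₁ γ + (β₂ - β₁) / α ^ 2 := by
  have hα2 : 0 < α ^ 2 := by positivity
  have hdiv : 2 * (1 - γ) ^ 2 / β₂ ≤ 2 * (1 - γ) ^ 2 / β₁ :=
    div_le_div_of_nonneg_left (by positivity) hβ₁ hβ
  have hsq : γ ^ 2 * (β₂ - β₁) ≤ (β₂ - β₁) / α ^ 2 := by
    rw [le_div_iff₀ hα2]
    nlinarith
  rw [Ffun_two_eq γ (hβ₁.trans_le hβ).ne', Ffun_two_eq γ hβ₁.ne']
  linarith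

theorem mem_Gam_iff {α β γ : ℝ} (hβ : β < 1) :
    γ ∈ Gam α β ↔ 0 ≤ γ ∧ α ^ 2 * γ ^ 2 ≤ 1 := by
  have hconstr : 2 - 2 * β - 2 * α ^ 2 * Ffun 0 β γ = 2 * (1 - β) * (1 - α ^ 2 * γ ^ 2) := by
    rw [Ffun_zero]
    ring
  have h1β : 0 < 2 * (1 - β) := by linarith
  change 0 ≤ γ ∧ 0 ≤ 2 - 2 * β - 2 * α ^ 2 * Ffun 0 β γ ↔ _
  rw [hconstr, mul_nonneg_iff_of_pos_left h1β, sub_nonneg]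

theorem zero_mem_Gam {α β : ℝ} (hβ : β < 1) : (0 : ℝ) ∈ Gam α β := by
  simp [mem_Gam_iff hβ]

theorem one_mem_Gam {α β : ℝ} (hβ : β < 1) (hα : α ^ 2 ≤ 1) : (1 : ℝ) ∈ Gam α β := by
  simpa [mem_Gam_iff hβ] using hα

theorem le_rhoExp {α β : ℝ} (hβ : β ∈ Set.Ioo (0 : ℝ) 1) (hα : α ^ 2 ≤ 1) :
    2 + 2 * β - 2 * α ^ 2 * Ffun 2 β 1 ≤ rhoExp α β := by
  have hinf : sInf (Ffun 2 β '' Gam α β) ≤ Ffun 2 β 1 :=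
    csInf_le (bddBelow_Ffun_image _ zero_le_two hβ.1.le hβ.2.le)
      ⟨1, one_mem_Gam hβ.2 hα, rfl⟩
  unfold rhoExp
  linarith [mul_le_mul_of_nonneg_left hinf (sq_nonneg α)]

theorem rhoExp_monotoneOn {α : ℝ} (hα : α ≠ 0) : MonotoneOn (rhoExp α) (Set.Ioo 0 1) := by
  intro β₁ hβ₁ β₂ hβ₂ hβ
  have hΓ : Gam α β₂ = Gam α β₁ := by
    ext γ
    rw [mem_Gam_iff hβ₁.2, mem_Gam_iff hβ₂.2]
  have hinf : sInf (Ffun 2 β₂ '' Gam α β₂) ≤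
      sInf (Ffun 2 β₁ '' Gam α β₁) + (β₂ - β₁) / α ^ 2 := by
    rw [hΓ]
    refine csInf_image_le_csInf_image_add ⟨0, zero_mem_Gam hβ₁.2⟩
      (bddBelow_Ffun_image _ zero_le_two hβ₂.1.le hβ₂.2.le) fun γ hγ => ?_
    exact Ffun_two_le_add hα hβ₁.1 hβ ((mem_Gam_iff hβ₁.2).1 hγ).2
  have hα2 : 0 < α ^ 2 := by positivity
  have hscaled := mul_le_mul_of_nonneg_left hinf hα2.le
  rw [mul_add, mul_div_cancel₀ _ hα2.ne'] at hscaled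
  unfold rhoExp
  linarith

/-- Properties of the exponent `ρ(α,β)`: the lower bound
`ρ(α,β) ≥ 2 + 2β - 2α²F_{2,β}(1) = 2(1-α²)(1+β)`, and monotonicity in `β`. -/
theorem rhoExp_lower_bound_and_monotone (α : ℝ) (hα0 : 0 < α) (hα1 : α < 1) :
    (∀ β ∈ Set.Ioo (0 : ℝ) 1,
      2 + 2 * β - 2 * α ^ 2 * Ffun 2 β 1 ≤ rhoExp α β ∧
      2 + 2 * β - 2 * α ^ 2 * Ffun 2 β 1 = 2 * (1 - α ^ 2) * (1 + β)) ∧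
    (∀ β₁ ∈ Set.Ioo (0 : ℝ) 1, ∀ β₂ ∈ Set.Ioo (0 : ℝ) 1, β₁ ≤ β₂ →
      rhoExp α β₁ ≤ rhoExp α β₂) := by
  have hα2 : α ^ 2 ≤ 1 := pow_le_one₀ hα0.le hα1.le
  refine ⟨fun β hβ => ⟨le_rhoExp hβ hα2, ?_⟩, fun β₁ hβ₁ β₂ hβ₂ hβ => ?_⟩
  · rw [Ffun_two_one hβ.1.ne']
    ring
  · exact rhoExp_monotoneOn hα0.ne' hβ₁ hβ₂ hβ

end
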